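/- Let M be a positive integer, let a_1,…,a_M > 0 and b_0, b_1,…,b_{M−1} > 0 be real numbers, and for real q > −b_0 define η(q) = exp( ∫_0^∞ [ (e^{−tq} − 1) e^{−b_0 t} ∏_{j=1}^{M−1} (1 − e^{−b_j t}) / ∏_{i=1}^M (1 − e^{−a_i t}) + q e^{−t} (∏_{j=1}^{M−1} b_j)/(∏_{i=1}^M a_i) ] dt/t ). Then there exists a constant C > 0 such that | log η(q) − (∏_{j=1}^{M−1} b_j)/(∏_{i=1}^M a_i) · q log q | ≤ C q for all real q ≥ 1. -/

import Mathlib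

/-
Write `log η(q) = ∫₀^∞ ((e^{-qt} - 1) F(t) + q r e^{-t}) dt / t` with
`F(t) = e^{-b₀t} ∏_j (1 - e^{-b_j t}) / ∏_i (1 - e^{-a_i t})` and `r = ∏_j b_j / ∏_i a_i`.
The denominator has one more factor than the numerator, so `F(t) = r/t + O(1)` as `t → 0⁺`,
while `F` decays exponentially at `∞`. Replacing `F(t)` by `r/t` gives exactly `r (q log q - q)`
(Frullani's integral plus the integral of an exact derivative). The error
`∫ (e^{-qt} - 1)(F(t) - r/t) dt / t` is `O(q)`: use `|e^{-qt} - 1| ≤ qt` on `(0, 1]` and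
`|e^{-qt} - 1| ≤ 1` on `(1, ∞)`.
-/

open MeasureTheory Set Real Filter Topology

lemma abs_exp_neg_sub_one_le {x : ℝ} (hx : 0 ≤ x) : |exp (-x) - 1| ≤ x := by
  rw [abs_sub_comm, abs_of_nonneg (by linarith [exp_le_one_iff.mpr (neg_nonpos.mpr hx)])]
  linarith [one_sub_le_exp_neg x]

lemma abs_exp_neg_sub_one_le_one {x : ℝ} (hx : 0 ≤ x) : |exp (-x) - 1| ≤ 1 := by
  rw [abs_sub_comm, abs_of_nonneg (by linarith [exp_le_one_iff.mpr (neg_nonpos.mpr hx)])]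
  linarith [exp_pos (-x)]

lemma mul_exp_neg_le_one_sub_exp_neg (x : ℝ) : x * exp (-x) ≤ 1 - exp (-x) := by
  have h := mul_le_mul_of_nonneg_right (add_one_le_exp x) (exp_pos (-x)).le
  rw [← exp_add, add_neg_cancel, exp_zero] at h
  linarith

lemma exp_sub_one_le_mul_exp (x : ℝ) : exp x - 1 ≤ x * exp x := by
  have h := mul_le_mul_of_nonneg_right (one_sub_le_exp_neg x) (exp_pos x).le
  rw [← exp_add, neg_add_cancel, exp_zero] at h
  linarith

lemma abs_sub_div_le_of_exp_bounds {x y c d t : ℝ} (hx : 0 ≤ x) (hc : 0 ≤ c) (hd : 0 ≤ d)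
    (ht : t ∈ Ioc 0 1) (hlo : x / t * exp (-c * t) ≤ y) (hhi : y ≤ x / t * exp (d * t)) :
    |y - x / t| ≤ x * (c + d * exp d) := by
  obtain ⟨ht, ht1⟩ := ht
  have hxt : 0 ≤ x / t := div_nonneg hx ht.le
  have hdexp : 0 ≤ d * exp d := by positivity
  rw [abs_le]
  constructor
  · calc -(x * (c + d * exp d)) ≤ x / t * (1 - c * t) - x / t := by
          rw [mul_sub, mul_one, sub_sub_cancel_left, mul_comm c t, ← mul_assoc,
            div_mul_cancel₀ x ht.ne']
          nlinarith
      _ ≤ x / t * exp (-c * t) - x / t := by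
          gcongr
          rw [neg_mul]
          exact one_sub_le_exp_neg _
      _ ≤ y - x / t := by linarith
  · calc y - x / t ≤ x / t * (exp (d * t) - 1) := by linarith
      _ ≤ x / t * (d * t * exp (d * t)) := by gcongr; exact exp_sub_one_le_mul_exp _
      _ = x * (d * exp (d * t)) := by field_simp
      _ ≤ x * (c + d * exp d) := by
          gcongr
          nlinarith [exp_le_exp.mpr (by nlinarith : d * t ≤ d), mul_nonneg hd (exp_pos (d * t)).le]

lemma integrableOn_exp_neg_sub_exp_neg_div {p q : ℝ} (hp : 0 < p) (hq : 0 < q) :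
    IntegrableOn (fun t => (exp (-(p * t)) - exp (-(q * t))) / t) (Ioi 0) := by
  wlog hpq : p ≤ q generalizing p q
  · exact (this hq hp (le_of_not_ge hpq)).neg.congr_fun
      (fun t _ => by simp only [Pi.neg_apply]; ring) measurableSet_Ioi
  refine Integrable.mono' ((exp_neg_integrableOn_Ioi 0 hp).const_mul (q - p))
    ((ContinuousOn.div (by fun_prop) continuousOn_id fun t ht => ht.ne').aestronglyMeasurable
      measurableSet_Ioi) ?_
  filter_upwards [ae_restrict_mem measurableSet_Ioi] with t (ht : 0 < t)
  have hsplit : exp (-(p * t)) - exp (-(q * t)) = exp (-(p * t)) * (1 - exp (-((q - p) * t))) := by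
    rw [mul_sub, mul_one, ← exp_add]; ring_nf
  have h := abs_exp_neg_sub_one_le (mul_nonneg (sub_nonneg.mpr hpq) ht.le)
  rw [abs_sub_comm] at h
  rw [Real.norm_eq_abs, hsplit, abs_div, abs_mul, abs_of_pos (exp_pos _), abs_of_pos ht,
    div_le_iff₀ ht, neg_mul]
  nlinarith [exp_pos (-(p * t))]

lemma integral_exp_neg_sub_exp_neg_div {p q : ℝ} (hp : 0 < p) (hq : 0 < q) :
    ∫ t in Ioi 0, (exp (-(p * t)) - exp (-(q * t))) / t = log (q / p) := by
  have hcont : Continuous fun x : ℝ => exp (-x) := by fun_prop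
  have hL : Tendsto (fun x : ℝ => exp (-x)) (𝓝[>] 0) (𝓝 1) := by
    simpa using (hcont.tendsto 0).mono_left nhdsWithin_le_nhds
  have h := Frullani.integral_Ioi_eq (hcont.locallyIntegrable.locallyIntegrableOn _)
    hp hq hL tendsto_exp_neg_atTop_nhds_zero ?_
  · simpa [div_eq_inv_mul] using h
  · simpa [div_eq_inv_mul] using integrableOn_exp_neg_sub_exp_neg_div hp hq

lemma hasDerivAt_dslope_exp_neg {q t : ℝ} (ht : t ≠ 0) :
    HasDerivAt (dslope (fun s => exp (-(q * s))) 0)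
      ((1 - exp (-(q * t)) - q * t * exp (-(q * t))) / t ^ 2) t := by
  have h : HasDerivAt (fun s => (exp (-(q * s)) - 1) / s)
      (((-q) * exp (-(q * t)) * t - (exp (-(q * t)) - 1) * 1) / t ^ 2) t := by
    refine HasDerivAt.div ?_ (hasDerivAt_id t) ht
    simpa [mul_comm] using ((hasDerivAt_id t).const_mul q).neg.exp.sub_const 1
  refine (h.congr_of_eventuallyEq ?_).congr_deriv (by ring)
  filter_upwards [eventually_ne_nhds ht] with s hs
  simp [dslope_of_ne _ hs, slope_def_field]

lemma integrableOn_and_integral_exp_neg_sub_one_add_mul_exp_neg_div_sq {q : ℝ} (hq : 0 < q) :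
    IntegrableOn (fun t => (exp (-(q * t)) - 1 + q * t * exp (-t)) / t ^ 2) (Ioi 0) ∧
    ∫ t in Ioi 0, (exp (-(q * t)) - 1 + q * t * exp (-t)) / t ^ 2 = q * log q - q := by
  -- `g t = (e^{-qt} - 1)/t` is increasing from `g 0 = -q` to `0`, so `∫ g' = q`, and the integrand
  -- is `q` times Frullani's integrand minus `g'`.
  set g := dslope (fun s => exp (-(q * s))) 0
  set g' := fun t => (1 - exp (-(q * t)) - q * t * exp (-(q * t))) / t ^ 2
  have hderiv : ∀ t ∈ Ioi (0 : ℝ), HasDerivAt g (g' t) t := fun t ht =>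
    hasDerivAt_dslope_exp_neg (ne_of_gt ht)
  have hcont : ContinuousWithinAt g (Ici 0) 0 :=
    (continuousAt_dslope_same.mpr (by fun_prop)).continuousWithinAt
  have hg0 : g 0 = -q := by
    simp only [g, dslope_same]
    simpa using (((hasDerivAt_id (0 : ℝ)).const_mul q).neg.exp).deriv
  have hpos : ∀ t ∈ Ioi (0 : ℝ), 0 ≤ g' t := fun t _ =>
    div_nonneg (by linarith [mul_exp_neg_le_one_sub_exp_neg (q * t)]) (sq_nonneg t)
  have hlim : Tendsto g atTop (𝓝 0) := by
    have h : Tendsto (fun t => (exp (-(q * t)) - 1) * t⁻¹) atTop (𝓝 ((0 - 1) * 0)) :=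
      ((tendsto_exp_neg_atTop_nhds_zero.comp (tendsto_id.const_mul_atTop hq)).sub_const 1).mul
        tendsto_inv_atTop_zero
    rw [mul_zero] at h
    refine h.congr' ?_
    filter_upwards [eventually_gt_atTop 0] with t ht
    simp [g, dslope_of_ne _ ht.ne', slope_def_field, div_eq_mul_inv]
  have hg'int := integrableOn_Ioi_deriv_of_nonneg hcont hderiv hpos hlim
  have hfr := integrableOn_exp_neg_sub_exp_neg_div one_pos hq
  have heq : EqOn (fun t => q * ((exp (-(1 * t)) - exp (-(q * t))) / t) - g' t)
      (fun t => (exp (-(q * t)) - 1 + q * t * exp (-t)) / t ^ 2) (Ioi 0) := by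
    intro t (ht : 0 < t)
    simp only [g', one_mul]
    field_simp
    ring
  refine ⟨IntegrableOn.congr_fun ((hfr.const_mul q).sub hg'int) heq measurableSet_Ioi, ?_⟩
  rw [← setIntegral_congr_fun measurableSet_Ioi heq, integral_sub (hfr.const_mul q) hg'int,
    integral_const_mul, integral_exp_neg_sub_exp_neg_div one_pos hq,
    integral_Ioi_of_hasDerivAt_of_nonneg hcont hderiv hpos hlim, hg0, div_one]
  ring

lemma abs_exp_neg_mul_sub_one_mul_div_le {q t x L : ℝ} (hq : 0 ≤ q) (ht : 0 < t) (hx : |x| ≤ L) :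
    |(exp (-(q * t)) - 1) * (x / t)| ≤ q * L := by
  rw [abs_mul, abs_div, abs_of_pos ht]
  calc |exp (-(q * t)) - 1| * (|x| / t) ≤ (q * t) * (L / t) := by
        gcongr
        exact abs_exp_neg_sub_one_le (by positivity)
    _ = q * L := by field_simp

section Remainder

variable {F : ℝ → ℝ} {r L q : ℝ}

lemma integrableOn_and_abs_integral_exp_neg_sub_one_mul_le (hF : ContinuousOn F (Ioi 0))
    (hsmall : ∀ t ∈ Ioc 0 1, |F t - r / t| ≤ L)
    (hlarge : IntegrableOn (fun t => (F t - r / t) / t) (Ioi 1)) (hq : 0 ≤ q) :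
    IntegrableOn (fun t => (exp (-(q * t)) - 1) * ((F t - r / t) / t)) (Ioi 0) ∧
    |∫ t in Ioi 0, (exp (-(q * t)) - 1) * ((F t - r / t) / t)|
      ≤ q * L + ∫ t in Ioi 1, |(F t - r / t) / t| := by
  set R := fun t => (exp (-(q * t)) - 1) * ((F t - r / t) / t)
  have hexp : Continuous fun t => exp (-(q * t)) - 1 := by fun_prop
  have hRcont : ContinuousOn R (Ioi 0) :=
    hexp.continuousOn.mul ((hF.sub (continuousOn_const.div continuousOn_id
      fun t ht => ne_of_gt ht)).div continuousOn_id fun t ht => ne_of_gt ht)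
  have hRsmall : ∀ t ∈ Ioc (0 : ℝ) 1, ‖R t‖ ≤ q * L := fun t ht =>
    abs_exp_neg_mul_sub_one_mul_div_le hq ht.1 (hsmall t ht)
  have hRlarge : ∀ t ∈ Ioi (1 : ℝ), ‖R t‖ ≤ |(F t - r / t) / t| := fun t (ht : 1 < t) => by
    rw [Real.norm_eq_abs, abs_mul]
    exact mul_le_of_le_one_left (abs_nonneg _) (abs_exp_neg_sub_one_le_one (by positivity))
  have hRint_small : IntegrableOn R (Ioc 0 1) :=
    IntegrableOn.of_bound (μ := volume) measure_Ioc_lt_top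
      ((hRcont.mono Ioc_subset_Ioi_self).aestronglyMeasurable measurableSet_Ioc) (q * L)
      ((ae_restrict_mem measurableSet_Ioc).mono hRsmall)
  have hRint_large : IntegrableOn R (Ioi 1) :=
    hlarge.bdd_mul hexp.aestronglyMeasurable
      ((ae_restrict_mem measurableSet_Ioi).mono fun t (ht : 1 < t) =>
        abs_exp_neg_sub_one_le_one (by positivity))
  have hsplit := setIntegral_union (Ioc_disjoint_Ioi le_rfl) measurableSet_Ioi
    hRint_small hRint_large
  rw [Ioc_union_Ioi_eq_Ioi zero_le_one] at hsplit
  refine ⟨by simpa only [Ioc_union_Ioi_eq_Ioi zero_le_one] using hRint_small.union hRint_large, ?_⟩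
  rw [hsplit]
  refine (abs_add_le _ _).trans (add_le_add ?_ ?_)
  · simpa using norm_setIntegral_le_of_norm_le_const (μ := volume) measure_Ioc_lt_top hRsmall
  · exact norm_integral_le_of_norm_le hlarge.abs ((ae_restrict_mem measurableSet_Ioi).mono hRlarge)

lemma abs_integral_exp_neg_sub_one_mul_add_sub_le (hF : ContinuousOn F (Ioi 0))
    (hsmall : ∀ t ∈ Ioc 0 1, |F t - r / t| ≤ L)
    (hlarge : IntegrableOn (fun t => (F t - r / t) / t) (Ioi 1)) (hq : 0 < q) :
    |(∫ t in Ioi 0, ((exp (-t * q) - 1) * F t + q * exp (-t) * r) / t) - r * (q * log q - q)|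
      ≤ q * L + ∫ t in Ioi 1, |(F t - r / t) / t| := by
  obtain ⟨hRint, hR⟩ := integrableOn_and_abs_integral_exp_neg_sub_one_mul_le hF hsmall hlarge hq.le
  obtain ⟨hJint, hJ⟩ := integrableOn_and_integral_exp_neg_sub_one_add_mul_exp_neg_div_sq hq
  have hdecomp : EqOn
      (fun t => r * ((exp (-(q * t)) - 1 + q * t * exp (-t)) / t ^ 2) +
        (exp (-(q * t)) - 1) * ((F t - r / t) / t))
      (fun t => ((exp (-t * q) - 1) * F t + q * exp (-t) * r) / t) (Ioi 0) := by
    intro t (ht : 0 < t)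
    field_simp
    ring_nf
  rwa [← setIntegral_congr_fun measurableSet_Ioi hdecomp, integral_add (hJint.const_mul r) hRint,
    integral_const_mul, hJ, add_sub_cancel_left]

lemma exists_abs_integral_exp_neg_sub_one_mul_add_sub_le (hF : ContinuousOn F (Ioi 0))
    (hr : 0 < r) (hsmall : ∀ t ∈ Ioc 0 1, |F t - r / t| ≤ L)
    (hlarge : IntegrableOn (fun t => (F t - r / t) / t) (Ioi 1)) :
    ∃ C : ℝ, 0 < C ∧ ∀ q : ℝ, 1 ≤ q →
      |(∫ t in Ioi 0, ((exp (-t * q) - 1) * F t + q * exp (-t) * r) / t) - r * (q * log q)|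
        ≤ C * q := by
  set K := ∫ t in Ioi 1, |(F t - r / t) / t|
  have hL : 0 ≤ L := (abs_nonneg _).trans (hsmall 1 ⟨one_pos, le_rfl⟩)
  have hK : 0 ≤ K := setIntegral_nonneg measurableSet_Ioi fun _ _ => abs_nonneg _
  refine ⟨r + L + K, by positivity, fun q hq => ?_⟩
  have h := abs_integral_exp_neg_sub_one_mul_add_sub_le hF hsmall hlarge (one_pos.trans_le hq)
  calc _ = |(∫ t in Ioi 0, ((exp (-t * q) - 1) * F t + q * exp (-t) * r) / t)
          - r * (q * log q - q) - r * q| := by congr 1; ring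
    _ ≤ q * L + K + r * q := (abs_sub _ _).trans
          (add_le_add h (abs_of_pos (by positivity : 0 < r * q)).le)
    _ ≤ (r + L + K) * q := by nlinarith

end Remainder

section OneSubExpProd

variable {ι : Type*} {s : Finset ι} {c : ι → ℝ} {t : ℝ}

noncomputable def oneSubExpProd (s : Finset ι) (c : ι → ℝ) (t : ℝ) : ℝ :=
  ∏ i ∈ s, (1 - exp (-c i * t))

lemma one_sub_exp_neg_mul_nonneg {c : ℝ} (hc : 0 ≤ c) (ht : 0 ≤ t) : 0 ≤ 1 - exp (-c * t) := by
  rw [sub_nonneg, exp_le_one_iff, neg_mul]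
  exact neg_nonpos.mpr (mul_nonneg hc ht)

lemma continuous_oneSubExpProd : Continuous (oneSubExpProd s c) :=
  continuous_finsetProd _ fun _ _ => by fun_prop

lemma oneSubExpProd_pos (hc : ∀ i ∈ s, 0 < c i) (ht : 0 < t) : 0 < oneSubExpProd s c t :=
  Finset.prod_pos fun i hi => by
    rw [sub_pos, exp_lt_one_iff, neg_mul, neg_lt_zero]
    exact mul_pos (hc i hi) ht

lemma oneSubExpProd_nonneg (hc : ∀ i ∈ s, 0 ≤ c i) (ht : 0 ≤ t) : 0 ≤ oneSubExpProd s c t :=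
  Finset.prod_nonneg fun i hi => one_sub_exp_neg_mul_nonneg (hc i hi) ht

lemma oneSubExpProd_le_one (hc : ∀ i ∈ s, 0 ≤ c i) (ht : 0 ≤ t) : oneSubExpProd s c t ≤ 1 :=
  Finset.prod_le_one (fun i hi => one_sub_exp_neg_mul_nonneg (hc i hi) ht)
    fun i _ => by linarith [exp_pos (-c i * t)]

lemma oneSubExpProd_le (hc : ∀ i ∈ s, 0 ≤ c i) (ht : 0 ≤ t) :
    oneSubExpProd s c t ≤ (∏ i ∈ s, c i) * t ^ s.card := by
  rw [← Finset.prod_const, ← Finset.prod_mul_distrib]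
  refine Finset.prod_le_prod (fun i hi => one_sub_exp_neg_mul_nonneg (hc i hi) ht) fun i hi => ?_
  have h := abs_exp_neg_sub_one_le (mul_nonneg (hc i hi) ht)
  rw [abs_sub_comm] at h
  rw [neg_mul]
  exact (le_abs_self _).trans h

lemma le_oneSubExpProd (hc : ∀ i ∈ s, 0 ≤ c i) (ht : 0 ≤ t) :
    (∏ i ∈ s, c i) * t ^ s.card * exp (-(∑ i ∈ s, c i) * t) ≤ oneSubExpProd s c t := by
  rw [← Finset.prod_const, ← Finset.prod_mul_distrib, neg_mul, Finset.sum_mul,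
    ← Finset.sum_neg_distrib, exp_sum, ← Finset.prod_mul_distrib]
  refine Finset.prod_le_prod (fun i hi => by have := hc i hi; positivity) fun i _ => ?_
  simpa [neg_mul] using mul_exp_neg_le_one_sub_exp_neg (c i * t)

lemma oneSubExpProd_le_of_le (hc : ∀ i ∈ s, 0 ≤ c i) {t' : ℝ} (ht : 0 ≤ t) (htt' : t ≤ t') :
    oneSubExpProd s c t ≤ oneSubExpProd s c t' :=
  Finset.prod_le_prod (fun i hi => one_sub_exp_neg_mul_nonneg (hc i hi) ht) fun i hi => by
    have := hc i hi
    exact sub_le_sub_left (exp_le_exp.mpr (by nlinarith)) 1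

end OneSubExpProd

section BarnesKernel

variable {ι κ : Type*} {a : ι → ℝ} {s : Finset ι} {b₀ : ℝ} {b : κ → ℝ} {u : Finset κ} {t : ℝ}

noncomputable def barnesKernel (a : ι → ℝ) (s : Finset ι) (b₀ : ℝ) (b : κ → ℝ) (u : Finset κ)
    (t : ℝ) : ℝ :=
  exp (-b₀ * t) * oneSubExpProd u b t / oneSubExpProd s a t

lemma continuousOn_barnesKernel (ha : ∀ i ∈ s, 0 < a i) :
    ContinuousOn (barnesKernel a s b₀ b u) (Ioi 0) :=
  ((by fun_prop : Continuous fun t => exp (-b₀ * t)).mul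
    continuous_oneSubExpProd).continuousOn.div continuous_oneSubExpProd.continuousOn
    fun _ ht => (oneSubExpProd_pos ha ht).ne'

lemma barnesKernel_le (ha : ∀ i ∈ s, 0 < a i) (hb : ∀ j ∈ u, 0 ≤ b j) (hb₀ : 0 ≤ b₀)
    (hcard : s.card = u.card + 1) (ht : 0 < t) :
    barnesKernel a s b₀ b u t ≤ (∏ j ∈ u, b j) / (∏ i ∈ s, a i) / t * exp ((∑ i ∈ s, a i) * t) := by
  have hA : 0 < ∏ i ∈ s, a i := Finset.prod_pos ha
  have hnum : exp (-b₀ * t) * oneSubExpProd u b t ≤ (∏ j ∈ u, b j) * t ^ u.card :=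
    (mul_le_of_le_one_left (oneSubExpProd_nonneg hb ht.le)
      (exp_le_one_iff.mpr (by nlinarith))).trans (oneSubExpProd_le hb ht.le)
  refine (div_le_div₀ (by have := Finset.prod_nonneg hb; positivity) hnum (by positivity)
    (le_oneSubExpProd (fun i hi => (ha i hi).le) ht.le)).trans_eq ?_
  rw [hcard, pow_succ, neg_mul, exp_neg]
  field_simp

lemma le_barnesKernel (ha : ∀ i ∈ s, 0 < a i) (hb : ∀ j ∈ u, 0 ≤ b j)
    (hcard : s.card = u.card + 1) (ht : 0 < t) :
    (∏ j ∈ u, b j) / (∏ i ∈ s, a i) / t * exp (-(b₀ + ∑ j ∈ u, b j) * t)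
      ≤ barnesKernel a s b₀ b u t := by
  have hA : 0 < ∏ i ∈ s, a i := Finset.prod_pos ha
  have hnum : exp (-b₀ * t) * ((∏ j ∈ u, b j) * t ^ u.card * exp (-(∑ j ∈ u, b j) * t))
      ≤ exp (-b₀ * t) * oneSubExpProd u b t :=
    mul_le_mul_of_nonneg_left (le_oneSubExpProd hb ht.le) (exp_pos _).le
  refine le_trans (le_of_eq ?_) (div_le_div₀ (by have := oneSubExpProd_nonneg hb ht.le; positivity)
    hnum (oneSubExpProd_pos ha ht) (oneSubExpProd_le (fun i hi => (ha i hi).le) ht.le))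
  rw [hcard, pow_succ, show -(b₀ + ∑ j ∈ u, b j) * t = -b₀ * t + -(∑ j ∈ u, b j) * t by ring,
    exp_add]
  field_simp

lemma abs_barnesKernel_sub_le (ha : ∀ i ∈ s, 0 < a i) (hb : ∀ j ∈ u, 0 ≤ b j) (hb₀ : 0 ≤ b₀)
    (hcard : s.card = u.card + 1) (ht : t ∈ Ioc 0 1) :
    |barnesKernel a s b₀ b u t - (∏ j ∈ u, b j) / (∏ i ∈ s, a i) / t|
      ≤ (∏ j ∈ u, b j) / (∏ i ∈ s, a i) *
          (b₀ + ∑ j ∈ u, b j + (∑ i ∈ s, a i) * exp (∑ i ∈ s, a i)) :=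
  abs_sub_div_le_of_exp_bounds
    (div_nonneg (Finset.prod_nonneg hb) (Finset.prod_pos ha).le)
    (add_nonneg hb₀ (Finset.sum_nonneg hb)) (Finset.sum_nonneg fun i hi => (ha i hi).le) ht
    (le_barnesKernel ha hb hcard ht.1) (barnesKernel_le ha hb hb₀ hcard ht.1)

lemma barnesKernel_le_of_one_le (ha : ∀ i ∈ s, 0 < a i) (hb : ∀ j ∈ u, 0 ≤ b j) (ht : 1 ≤ t) :
    barnesKernel a s b₀ b u t ≤ exp (-b₀ * t) / oneSubExpProd s a 1 :=
  div_le_div₀ (exp_pos _).le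
    (mul_le_of_le_one_right (exp_pos _).le (oneSubExpProd_le_one hb (by linarith)))
    (oneSubExpProd_pos ha one_pos)
    (oneSubExpProd_le_of_le (fun i hi => (ha i hi).le) zero_le_one ht)

lemma integrableOn_barnesKernel_sub_div (ha : ∀ i ∈ s, 0 < a i) (hb : ∀ j ∈ u, 0 ≤ b j)
    (hb₀ : 0 < b₀) :
    IntegrableOn (fun t => (barnesKernel a s b₀ b u t - (∏ j ∈ u, b j) / (∏ i ∈ s, a i) / t) / t)
      (Ioi 1) := by
  set r := (∏ j ∈ u, b j) / (∏ i ∈ s, a i)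
  have hK : IntegrableOn (fun t => barnesKernel a s b₀ b u t / t) (Ioi 1) := by
    refine Integrable.mono' ((exp_neg_integrableOn_Ioi 1 hb₀).div_const (oneSubExpProd s a 1))
      (((continuousOn_barnesKernel ha).div continuousOn_id fun t ht => ne_of_gt ht).mono
        (Ioi_subset_Ioi zero_le_one) |>.aestronglyMeasurable measurableSet_Ioi) ?_
    filter_upwards [ae_restrict_mem measurableSet_Ioi] with t (ht : 1 < t)
    have hpos : 0 ≤ barnesKernel a s b₀ b u t :=
      div_nonneg (mul_nonneg (exp_pos _).le (oneSubExpProd_nonneg hb (by linarith)))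
        (oneSubExpProd_pos ha (by linarith)).le
    rw [Real.norm_eq_abs, abs_of_nonneg (div_nonneg hpos (by linarith))]
    exact (div_le_self hpos ht.le).trans (barnesKernel_le_of_one_le ha hb ht.le)
  have hpow : IntegrableOn (fun t : ℝ => r * t ^ (-2 : ℝ)) (Ioi 1) :=
    (integrableOn_Ioi_rpow_of_lt (by norm_num) one_pos).const_mul r
  refine (hK.sub hpow).congr_fun (fun t (ht : 1 < t) => ?_) measurableSet_Ioi
  simp only [Pi.sub_apply]
  rw [rpow_neg (by linarith), rpow_two]
  field_simp

/-- asymptotics of the Mellin transform `η` of `β_{M,M−1}(a,b)`: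
`|log η(q) − (∏_{j=1}^{M−1} b_j)/(∏_{i=1}^M a_i) · q log q| ≤ C q` for all `q ≥ 1`. -/
theorem stmt10 (M : ℕ) (hM : 0 < M) (a b : ℕ → ℝ)
    (ha : ∀ i ∈ Finset.Icc 1 M, 0 < a i)
    (hb : ∀ j ∈ Finset.Icc 0 (M - 1), 0 < b j)
    (η : ℝ → ℝ)
    (hη : ∀ q : ℝ, -(b 0) < q → η q =
      Real.exp (∫ t in Set.Ioi (0:ℝ),
        ((Real.exp (-t * q) - 1) * Real.exp (-(b 0) * t) *
          (∏ j ∈ Finset.Icc 1 (M - 1), (1 - Real.exp (-(b j) * t))) /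
          (∏ i ∈ Finset.Icc 1 M, (1 - Real.exp (-(a i) * t))) +
         q * Real.exp (-t) *
          (∏ j ∈ Finset.Icc 1 (M - 1), b j) / (∏ i ∈ Finset.Icc 1 M, a i)) / t)) :
    ∃ C : ℝ, 0 < C ∧ ∀ q : ℝ, 1 ≤ q →
      |Real.log (η q) -
        (∏ j ∈ Finset.Icc 1 (M - 1), b j) / (∏ i ∈ Finset.Icc 1 M, a i) *
          (q * Real.log q)| ≤ C * q := by
  have hb₀ : 0 < b 0 := hb 0 (by simp)
  have hb' : ∀ j ∈ Finset.Icc 1 (M - 1), 0 < b j := fun j hj =>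
    hb j (Finset.mem_Icc.mpr ⟨Nat.zero_le _, (Finset.mem_Icc.mp hj).2⟩)
  have hb'' : ∀ j ∈ Finset.Icc 1 (M - 1), 0 ≤ b j := fun j hj => (hb' j hj).le
  have hcard : (Finset.Icc 1 M).card = (Finset.Icc 1 (M - 1)).card + 1 := by simp; omega
  obtain ⟨C, hC, hbound⟩ := exists_abs_integral_exp_neg_sub_one_mul_add_sub_le
    (continuousOn_barnesKernel ha) (div_pos (Finset.prod_pos hb') (Finset.prod_pos ha))
    (fun t ht => abs_barnesKernel_sub_le ha hb'' hb₀.le hcard ht)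
    (integrableOn_barnesKernel_sub_div ha hb'' hb₀)
  refine ⟨C, hC, fun q hq => ?_⟩
  rw [hη q (by linarith), log_exp]
  convert hbound q hq using 6 with t
  simp only [barnesKernel, oneSubExpProd]
  ring
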